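/- arXiv:2509.05201 — 3 statements merged into one kernel-verified Lean document; each statement's English description precedes it below -/
import Mathlib

section
/- The Minkowski sum of two constrained zonotopes Z₁ = ⟨c₁, G₁, F₁, θ₁⟩ and Z₂ = ⟨c₂, G₂, F₂, θ₂⟩ equals the constrained zonotope with center c₁ + c₂, generator matrix [G₁ G₂], constraint matrix blkdiag(F₁, F₂), and constraint vector [θ₁; θ₂]. -/
open Matrix Pointwise

/-- Constrained zonotope `⟨c, G, F, θ⟩`. -/
def czono {n σ nc : Type*} [Fintype σ] [Fintype n]
    (c : n → ℝ) (G : Matrix n σ ℝ) (F : Matrix nc σ ℝ) (θ : nc → ℝ) : Set (n → ℝ) :=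
  {x | ∃ α : σ → ℝ, x = c + G.mulVec α ∧ (∀ i, |α i| ≤ 1) ∧ F.mulVec α = θ}

/-- Minkowski sum of constrained zonotopes. -/
theorem czono_minkowski_sum {n σ₁ σ₂ nc₁ nc₂ : ℕ}
    (c₁ c₂ : Fin n → ℝ) (G₁ : Matrix (Fin n) (Fin σ₁) ℝ) (G₂ : Matrix (Fin n) (Fin σ₂) ℝ)
    (F₁ : Matrix (Fin nc₁) (Fin σ₁) ℝ) (F₂ : Matrix (Fin nc₂) (Fin σ₂) ℝ)
    (θ₁ : Fin nc₁ → ℝ) (θ₂ : Fin nc₂ → ℝ) :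
    czono c₁ G₁ F₁ θ₁ + czono c₂ G₂ F₂ θ₂ =
      czono (c₁ + c₂) (Matrix.fromCols G₁ G₂)
        (Matrix.fromBlocks F₁ 0 0 F₂) (Sum.elim θ₁ θ₂) := by
  ext x
  constructor
  · rintro ⟨x₁, ⟨α₁, h1, b1, e1⟩, x₂, ⟨α₂, h2, b2, e2⟩, rfl⟩
    refine ⟨Sum.elim α₁ α₂, ?_, ?_, ?_⟩
    · simp [h1, h2, fromCols_mulVec_sumElim]
      abel
    · rintro (i | i)
      · simpa using b1 i
      · simpa using b2 i
    · ext (i | i) <;>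
        simp [fromBlocks_mulVec, ← e1, ← e2, Sum.elim_comp_inl, Sum.elim_comp_inr]
  · rintro ⟨α, rfl, b, e⟩
    refine ⟨c₁ + G₁.mulVec (α ∘ Sum.inl), ⟨α ∘ Sum.inl, rfl, fun i => b _, ?_⟩,
      c₂ + G₂.mulVec (α ∘ Sum.inr), ⟨α ∘ Sum.inr, rfl, fun i => b _, ?_⟩, ?_⟩
    · ext i; have := congrFun e (Sum.inl i); simpa [fromBlocks_mulVec] using this
    · ext i; have := congrFun e (Sum.inr i); simpa [fromBlocks_mulVec] using this
    · rw [← Sum.elim_comp_inl_inr α, fromCols_mulVec_sumElim]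
      simp [Sum.elim_comp_inl, Sum.elim_comp_inr]
      abel
end

section
/- Let Z₁ = ⟨c₁, G₁, F₁, θ₁⟩ and Z₂ = ⟨c₂, G₂, F₂, θ₂⟩ be constrained zonotopes. If there exist a matrix Π, a matrix H, and a vector γ satisfying G₁ = G₂Π, H F₁ = F₂Π, Hθ₁ = θ₂ + F₂γ, c₂ − c₁ = G₂γ, and |Π|𝟙 + |γ| ≤ 𝟙 (componentwise), then Z₁ ⊆ Z₂. -/
open Matrix

/-- LP certificate for containment of constrained zonotopes. -/
theorem czono_containment {n σ₁ σ₂ nc₁ nc₂ : ℕ}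
    (c₁ c₂ : Fin n → ℝ) (G₁ : Matrix (Fin n) (Fin σ₁) ℝ) (G₂ : Matrix (Fin n) (Fin σ₂) ℝ)
    (F₁ : Matrix (Fin nc₁) (Fin σ₁) ℝ) (F₂ : Matrix (Fin nc₂) (Fin σ₂) ℝ)
    (θ₁ : Fin nc₁ → ℝ) (θ₂ : Fin nc₂ → ℝ)
    (PiM : Matrix (Fin σ₂) (Fin σ₁) ℝ) (H : Matrix (Fin nc₂) (Fin nc₁) ℝ) (γ : Fin σ₂ → ℝ)
    (h1 : G₁ = G₂ * PiM)
    (h2 : H * F₁ = F₂ * PiM)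
    (h3 : H.mulVec θ₁ = θ₂ + F₂.mulVec γ)
    (h4 : c₂ - c₁ = G₂.mulVec γ)
    (h5 : ∀ i, (∑ j, |PiM i j|) + |γ i| ≤ 1) :
    czono c₁ G₁ F₁ θ₁ ⊆ czono c₂ G₂ F₂ θ₂ := by
  rintro x ⟨α, hx, hα, hF⟩
  refine ⟨PiM.mulVec α - γ, ?_, ?_, ?_⟩
  · rw [hx, Matrix.mulVec_sub, Matrix.mulVec_mulVec, ← h1]
    have h4' : c₂ = c₁ + G₂.mulVec γ := by
      rw [← h4]; ring_nf
    rw [h4']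
    ring_nf
  · intro i
    have hbound : |PiM.mulVec α i| ≤ ∑ j, |PiM i j| := by
      calc |PiM.mulVec α i| = |∑ j, PiM i j * α j| := rfl
        _ ≤ ∑ j, |PiM i j * α j| := Finset.abs_sum_le_sum_abs _ _
        _ ≤ ∑ j, |PiM i j| := by
            apply Finset.sum_le_sum
            intro j _
            rw [abs_mul]
            calc |PiM i j| * |α j| ≤ |PiM i j| * 1 :=
                  mul_le_mul_of_nonneg_left (hα j) (abs_nonneg _)
              _ = |PiM i j| := mul_one _
    calc |(PiM.mulVec α - γ) i| = |PiM.mulVec α i - γ i| := rfl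
      _ ≤ |PiM.mulVec α i| + |γ i| := abs_sub _ _
      _ ≤ (∑ j, |PiM i j|) + |γ i| := by linarith
      _ ≤ 1 := h5 i
  · rw [Matrix.mulVec_sub, Matrix.mulVec_mulVec, ← h2,
      ← Matrix.mulVec_mulVec, hF, h3]
    abel
end

section
/- Let P, Q ⊆ ℝⁿ and R ⊆ ℝᵐ be proper C-sets and K_f ∈ ℝ^{m×n}, A ∈ ℝ^{n×n}, B ∈ ℝ^{n×m}. Then the inequality g(P, (A+BK_f)x) + g(Q, x) + g(R, K_f x) ≤ g(P, x) holds for all x ∈ ℝⁿ if and only if the set inclusion (A+BK_f)ᵀ P* ⊕ Q* ⊕ K_fᵀ R* ⊆ P* holds, where P*, Q*, R* denote polar sets and ⊕ the Minkowski sum. -/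
open Matrix Pointwise

/-- Polar set of `S` (for `0 ∈ S`). -/
def polarSet {n : ℕ} (S : Set (Fin n → ℝ)) : Set (Fin n → ℝ) :=
  {x | ∀ y ∈ S, y ⬝ᵥ x ≤ 1}

lemma dotProduct_le_gauge {n : ℕ} {S : Set (Fin n → ℝ)} (hS0 : (0 : Fin n → ℝ) ∈ interior S)
    {p : Fin n → ℝ} (hp : p ∈ polarSet S) (y : Fin n → ℝ) : y ⬝ᵥ p ≤ gauge S y := by
  have habs : Absorbent ℝ S := absorbent_nhds_zero (mem_interior_iff_mem_nhds.1 hS0)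
  refine le_csInf habs.gauge_set_nonempty ?_
  rintro r ⟨hr, s, hs, rfl⟩
  have h1 : s ⬝ᵥ p ≤ 1 := hp s hs
  calc (r • s) ⬝ᵥ p = r * (s ⬝ᵥ p) := smul_dotProduct r s p
    _ ≤ r * 1 := by nlinarith
    _ = r := mul_one r

lemma exists_polar_dot_eq {n : ℕ} {S : Set (Fin n → ℝ)} (hc : IsCompact S) (hcv : Convex ℝ S)
    (h0 : (0 : Fin n → ℝ) ∈ interior S) (y : Fin n → ℝ) :
    ∃ p ∈ polarSet S, gauge S y ≤ y ⬝ᵥ p := by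
  have habs : Absorbent ℝ S := absorbent_nhds_zero (mem_interior_iff_mem_nhds.1 h0)
  rcases eq_or_lt_of_le (gauge_nonneg (s := S) y) with hg | hg
  · exact ⟨0, fun z _ => by simp, by simp [← hg]⟩
  set g := gauge S y with hgdef
  set y' := g⁻¹ • y with hy'def
  have hgauge_y' : gauge S y' = 1 := by
    rw [hy'def, gauge_smul_of_nonneg (inv_nonneg.2 hg.le), smul_eq_mul, ← hgdef,
      inv_mul_cancel₀ hg.ne']
  have hy'S : y' ∈ S := by
    have := mem_closure_of_gauge_le_one hcv (interior_subset h0) habs hgauge_y'.le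
    rwa [hc.isClosed.closure_eq] at this
  have hy'ni : y' ∉ interior S := fun h => by
    have := interior_subset_gauge_lt_one S h
    rw [Set.mem_setOf_eq, hgauge_y'] at this
    exact lt_irrefl 1 this
  obtain ⟨f, u, hfu, huy⟩ := geometric_hahn_banach_open (hcv.interior) isOpen_interior
    (convex_singleton y') (Set.disjoint_singleton_right.2 hy'ni)
  have hu : 0 < u := by have := hfu 0 h0; simpa using this
  have huy' : u ≤ f y' := huy y' rfl
  have hfS : ∀ s ∈ S, f s ≤ u := by
    intro s hs
    by_contra hlt
    push_neg at hlt
    have hfs : 0 < f s := hu.trans hlt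
    set t := u / f s with htdef
    have ht0 : 0 < t := div_pos hu hfs
    have ht1 : t < 1 := (div_lt_one hfs).2 hlt
    have hmem : (1 - t) • (0 : Fin n → ℝ) + t • s ∈ interior S :=
      hcv.combo_interior_self_mem_interior h0 hs (by linarith) ht0.le (by ring)
    have : f ((1 - t) • (0 : Fin n → ℝ) + t • s) < u := hfu _ hmem
    rw [smul_zero, zero_add, _root_.map_smul, smul_eq_mul, htdef, div_mul_cancel₀ _ hfs.ne'] at this
    exact lt_irrefl u this
  set w : Fin n → ℝ := fun i => f (Pi.single i 1) with hwdef
  have hfw : ∀ z : Fin n → ℝ, f z = z ⬝ᵥ w := by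
    intro z
    have hz : z = ∑ i, z i • (Pi.single i (1 : ℝ) : Fin n → ℝ) := by
      ext j
      simp [Pi.single_apply]
    conv_lhs => rw [hz]
    rw [map_sum]
    simp only [_root_.map_smul, smul_eq_mul]
    rfl
  refine ⟨u⁻¹ • w, ?_, ?_⟩
  · intro s hs
    have : s ⬝ᵥ (u⁻¹ • w) = u⁻¹ * (s ⬝ᵥ w) := dotProduct_smul u⁻¹ s w
    rw [this, ← hfw]
    have h2 := hfS s hs
    have h3 : (0:ℝ) < u⁻¹ := inv_pos.2 hu
    have h4 : u⁻¹ * u = 1 := inv_mul_cancel₀ hu.ne'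
    nlinarith
  · have hyy : y = g • y' := by rw [hy'def, smul_inv_smul₀ hg.ne']
    have : y ⬝ᵥ (u⁻¹ • w) = u⁻¹ * (y ⬝ᵥ w) := dotProduct_smul u⁻¹ y w
    rw [this, ← hfw]
    have hfy : f y = g * f y' := by rw [hyy, _root_.map_smul, smul_eq_mul]
    rw [hfy]
    calc g = u⁻¹ * (g * u) := by field_simp
      _ ≤ u⁻¹ * (g * f y') := by
          have := mul_le_mul_of_nonneg_left huy' hg.le
          nlinarith [inv_pos.2 hu]

lemma dot_transpose_mulVec {k l : ℕ} (M : Matrix (Fin k) (Fin l) ℝ)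
    (x : Fin l → ℝ) (p : Fin k → ℝ) : x ⬝ᵥ Mᵀ.mulVec p = M.mulVec x ⬝ᵥ p := by
  rw [Matrix.mulVec_transpose, dotProduct_comm (M.mulVec x) p,
    Matrix.dotProduct_mulVec, dotProduct_comm]

/-- The Minkowski–Lyapunov terminal-cost inequality is equivalent to a polar-set inclusion. -/
theorem gauge_lyapunov_iff_polar_inclusion {n m : ℕ}
    (P Q : Set (Fin n → ℝ)) (R : Set (Fin m → ℝ))
    (hPc : IsCompact P) (hPcv : Convex ℝ P) (hP0 : (0 : Fin n → ℝ) ∈ interior P)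
    (hQc : IsCompact Q) (hQcv : Convex ℝ Q) (hQ0 : (0 : Fin n → ℝ) ∈ interior Q)
    (hRc : IsCompact R) (hRcv : Convex ℝ R) (hR0 : (0 : Fin m → ℝ) ∈ interior R)
    (A : Matrix (Fin n) (Fin n) ℝ) (B : Matrix (Fin n) (Fin m) ℝ)
    (Kf : Matrix (Fin m) (Fin n) ℝ) :
    (∀ x : Fin n → ℝ,
        gauge P ((A + B * Kf).mulVec x) + gauge Q x + gauge R (Kf.mulVec x) ≤ gauge P x) ↔
      (A + B * Kf)ᵀ.mulVec '' polarSet P + polarSet Q + Kfᵀ.mulVec '' polarSet R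
        ⊆ polarSet P := by
  set M := A + B * Kf with hM
  constructor
  · intro h v hv
    rw [Set.mem_add] at hv
    obtain ⟨pq, hpq, rr, hrr, rfl⟩ := hv
    rw [Set.mem_add] at hpq
    obtain ⟨pp, hpp, q, hq, rfl⟩ := hpq
    obtain ⟨p, hp, rfl⟩ := hpp
    obtain ⟨r, hr, rfl⟩ := hrr
    intro x hx
    have e1 : x ⬝ᵥ (Mᵀ.mulVec p + q + Kfᵀ.mulVec r)
        = M.mulVec x ⬝ᵥ p + x ⬝ᵥ q + Kf.mulVec x ⬝ᵥ r := by
      rw [dotProduct_add, dotProduct_add, dot_transpose_mulVec,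
        dot_transpose_mulVec]
    rw [e1]
    have b1 := dotProduct_le_gauge hP0 hp (M.mulVec x)
    have b2 := dotProduct_le_gauge hQ0 hq x
    have b3 := dotProduct_le_gauge hR0 hr (Kf.mulVec x)
    have b4 := h x
    have b5 : gauge P x ≤ 1 := gauge_le_one_of_mem hx
    linarith
  · intro h x
    obtain ⟨p, hp, hpb⟩ := exists_polar_dot_eq hPc hPcv hP0 (M.mulVec x)
    obtain ⟨q, hq, hqb⟩ := exists_polar_dot_eq hQc hQcv hQ0 x
    obtain ⟨r, hr, hrb⟩ := exists_polar_dot_eq hRc hRcv hR0 (Kf.mulVec x)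
    have hv : Mᵀ.mulVec p + q + Kfᵀ.mulVec r ∈ polarSet P := by
      apply h
      rw [Set.mem_add]
      exact ⟨Mᵀ.mulVec p + q, Set.add_mem_add ⟨p, hp, rfl⟩ hq, Kfᵀ.mulVec r,
        ⟨r, hr, rfl⟩, rfl⟩
    have key := dotProduct_le_gauge hP0 hv x
    have e1 : x ⬝ᵥ (Mᵀ.mulVec p + q + Kfᵀ.mulVec r)
        = M.mulVec x ⬝ᵥ p + x ⬝ᵥ q + Kf.mulVec x ⬝ᵥ r := by
      rw [dotProduct_add, dotProduct_add, dot_transpose_mulVec,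
        dot_transpose_mulVec]
    rw [e1] at key
    linarith
end
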